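/- arXiv:2103.02373 — 4 statements merged into one kernel-verified Lean document; each statement's English description precedes it below -/
import Mathlib

section
/- For all t > 0 and x ∈ [0,1], ∫₀¹ G(t,x,y)² dy ≥ 1/√(8πt), where G is the periodic heat kernel on [0,1]. -/
/-!
By Poisson summation, `y ↦ G(t,x,y)` is the `1`-periodization `∑ₙ p(y + n)` of the Gaussian
density `p` of mean `x` and variance `2t`. Its terms are nonnegative, so `G²` dominates the
periodization of `p²`, whose integral over one period is `∫_ℝ p² = 1/√(8πt)`.
-/

open Real MeasureTheory

/-- The periodic heat kernel on `[0,1]` via its spectral decomposition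
`G(t,x,y) = ∑_{j ∈ ℤ} e^{-4π²j²t} e^{2πi j (x-y)}`. -/
noncomputable def heatKernel (t x y : ℝ) : ℂ :=
  ∑' j : ℤ, Complex.exp (-4 * (π : ℂ) ^ 2 * (j : ℂ) ^ 2 * (t : ℂ)) *
    Complex.exp (2 * (π : ℂ) * Complex.I * (j : ℂ) * ((x : ℂ) - (y : ℂ)))

lemma integral_sq_le_intervalIntegral_sq_tsum_add_intCast {φ : ℝ → ℝ} (hφ : 0 ≤ φ)
    (hsum : ∀ y, Summable fun n : ℤ => φ (y + n)) (hφ2 : Integrable fun x => φ x ^ 2)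
    (hper : IntervalIntegrable (fun y => (∑' n : ℤ, φ (y + n)) ^ 2) volume 0 1) :
    ∫ x, φ x ^ 2 ≤ ∫ y in (0 : ℝ)..1, (∑' n : ℤ, φ (y + n)) ^ 2 := by
  have hshift (n : ℤ) : IntervalIntegrable (fun y => φ (y + n) ^ 2) volume 0 1 :=
    (hφ2.comp_add_right (n : ℝ)).intervalIntegrable
  refine hasSum_le_of_sum_le hφ2.hasSum_intervalIntegral_comp_add_int fun s => ?_
  rw [← intervalIntegral.integral_finsetSum fun n _ => hshift n]
  refine intervalIntegral.integral_mono_on zero_le_one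
    (by simpa only [Finset.sum_fn] using IntervalIntegrable.sum s fun n _ => hshift n) hper
    fun y _ => ?_
  calc ∑ n ∈ s, φ (y + n) ^ 2 ≤ (∑ n ∈ s, φ (y + n)) ^ 2 :=
        Finset.sum_sq_le_sq_sum_of_nonneg fun n _ => hφ _
    _ ≤ (∑' n : ℤ, φ (y + n)) ^ 2 := by
        gcongr
        · exact Finset.sum_nonneg fun n _ => hφ _
        · exact (hsum y).sum_le_tsum s fun n _ => hφ _

namespace ProbabilityTheory

open scoped NNReal

lemma gaussianPDFReal_sq (μ : ℝ) (v : ℝ≥0) (x : ℝ) :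
    gaussianPDFReal μ v x ^ 2 = (√(4 * π * v))⁻¹ * gaussianPDFReal μ (v / 2) x := by
  rcases eq_or_ne v 0 with rfl | hv
  · simp
  have hv' : (0 : ℝ) < v := by positivity
  have h4 : √(4 * π * v) = 2 * √(π * v) := by
    rw [show (4 : ℝ) * π * v = 2 ^ 2 * (π * v) by ring, Real.sqrt_mul (by positivity),
      Real.sqrt_sq zero_le_two]
  have h2 : √(2 * π * v) ^ 2 = 2 * √(π * v) ^ 2 := by
    rw [Real.sq_sqrt (by positivity), Real.sq_sqrt (by positivity)]
    ring
  simp only [gaussianPDFReal, mul_pow, inv_pow, h2, h4, NNReal.coe_div, NNReal.coe_ofNat]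
  rw [sq (rexp _), ← Real.exp_add]
  field_simp
  ring_nf

lemma integral_gaussianPDFReal_sq (μ : ℝ) {v : ℝ≥0} (hv : v ≠ 0) :
    ∫ x, gaussianPDFReal μ v x ^ 2 = (√(4 * π * v))⁻¹ := by
  simp_rw [gaussianPDFReal_sq μ v, integral_const_mul,
    integral_gaussianPDFReal_eq_one μ (div_ne_zero hv two_ne_zero), mul_one]

lemma integrable_gaussianPDFReal_sq (μ : ℝ) (v : ℝ≥0) :
    Integrable fun x => gaussianPDFReal μ v x ^ 2 := by
  simp_rw [gaussianPDFReal_sq μ v]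
  exact (integrable_gaussianPDFReal μ _).const_mul _

lemma summable_gaussianPDFReal_add_intCast (μ : ℝ) (v : ℝ≥0) (y : ℝ) :
    Summable fun n : ℤ => gaussianPDFReal μ v (y + n) := by
  rcases eq_or_ne v 0 with rfl | hv
  · simp
  have hv' : (0 : ℝ) < v := by positivity
  refine ((HurwitzKernelBounds.summable_f_int 0 (y - μ) (t := 1 / (2 * π * v))
    (by positivity)).mul_left (√(2 * π * v))⁻¹).congr fun n => ?_
  rw [HurwitzKernelBounds.f_int, pow_zero, one_mul, gaussianPDFReal]
  congr 2
  field_simp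
  ring

end ProbabilityTheory

open ProbabilityTheory

lemma heatKernel_eq_jacobiTheta₂ (t x y : ℝ) :
    heatKernel t x y = jacobiTheta₂ (x - y) (4 * π * Complex.I * t) := by
  refine tsum_congr fun n => ?_
  rw [jacobiTheta₂_term, ← Complex.exp_add]
  congr 1
  ring_nf
  rw [Complex.I_sq]
  ring

lemma continuous_heatKernel {t : ℝ} (ht : 0 < t) (x : ℝ) :
    Continuous fun y => heatKernel t x y := by
  have hτ : 0 < (4 * π * Complex.I * t : ℂ).im := by simpa using (by positivity : 0 < 4 * π * t)
  simp_rw [heatKernel_eq_jacobiTheta₂]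
  exact continuous_iff_continuousAt.2 fun y =>
    (differentiableAt_jacobiTheta₂_fst _ hτ).continuousAt.comp (by fun_prop)

lemma heatKernel_eq_tsum_gaussianPDFReal {t : ℝ} (ht : 0 < t) (x y : ℝ) :
    heatKernel t x y = ((∑' n : ℤ, gaussianPDFReal x (2 * t).toNNReal (y + n) : ℝ) : ℂ) := by
  have ht4 : (0 : ℝ) < 4 * π * t := by positivity
  have hpoisson := Complex.tsum_exp_neg_quadratic (a := (4 * π * t : ℝ)) (by simpa using ht4)
    (Complex.I * (x - y))
  have hquadratic : heatKernel t x y = ∑' n : ℤ,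
      Complex.exp (-π * ((4 * π * t : ℝ) : ℂ) * n ^ 2 + 2 * π * (Complex.I * (x - y)) * n) := by
    refine tsum_congr fun n => ?_
    rw [← Complex.exp_add]
    push_cast
    ring_nf
  have hsqrt : (1 : ℂ) / ((4 * π * t : ℝ) : ℂ) ^ (1 / 2 : ℂ) = ((√(4 * π * t))⁻¹ : ℝ) := by
    rw [show (1 / 2 : ℂ) = ((1 / 2 : ℝ) : ℂ) by norm_num, ← Complex.ofReal_cpow ht4.le,
      ← Real.sqrt_eq_rpow]
    push_cast
    ring
  have hterm (n : ℤ) :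
      Complex.exp (-π / ((4 * π * t : ℝ) : ℂ) * (n + Complex.I * (Complex.I * (x - y))) ^ 2) =
        ((rexp (-(y + n - x) ^ 2 / (2 * (2 * t).toNNReal)) : ℝ) : ℂ) := by
    rw [Real.coe_toNNReal _ (by positivity), ← mul_assoc, Complex.I_mul_I, Complex.ofReal_exp]
    congr 1
    push_cast
    field_simp
    ring
  rw [hquadratic, hpoisson, hsqrt]
  simp_rw [hterm, gaussianPDFReal, Real.coe_toNNReal _ (by positivity : (0 : ℝ) ≤ 2 * t),
    ← Complex.ofReal_tsum, tsum_mul_left, ← Complex.ofReal_mul]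
  rw [show 2 * π * (2 * t) = 4 * π * t by ring]

theorem stmt1_general (t x : ℝ) (ht : 0 < t) :
    1 / Real.sqrt (8 * π * t) ≤ ∫ y in (0 : ℝ)..1, ((heatKernel t x y).re) ^ 2 := by
  set v := (2 * t).toNNReal
  have hv : v ≠ 0 := by simpa [v] using ht
  have hre (y : ℝ) : (heatKernel t x y).re = ∑' n : ℤ, gaussianPDFReal x v (y + n) := by
    rw [heatKernel_eq_tsum_gaussianPDFReal ht, Complex.ofReal_re]
  have hcont : Continuous fun y => (∑' n : ℤ, gaussianPDFReal x v (y + n)) ^ 2 := by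
    simp_rw [← hre]
    exact (Complex.continuous_re.comp (continuous_heatKernel ht x)).pow 2
  calc 1 / √(8 * π * t) = ∫ u, gaussianPDFReal x v u ^ 2 := by
        rw [integral_gaussianPDFReal_sq x hv, Real.coe_toNNReal _ (by positivity), one_div]
        ring_nf
    _ ≤ ∫ y in (0 : ℝ)..1, (∑' n : ℤ, gaussianPDFReal x v (y + n)) ^ 2 :=
        integral_sq_le_intervalIntegral_sq_tsum_add_intCast (gaussianPDFReal_nonneg x v)
          (summable_gaussianPDFReal_add_intCast x v) (integrable_gaussianPDFReal_sq x v)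
          (hcont.intervalIntegrable 0 1)
    _ = ∫ y in (0 : ℝ)..1, (heatKernel t x y).re ^ 2 := by simp_rw [hre]

theorem stmt1 (t x : ℝ) (ht : 0 < t) (hx : x ∈ Set.Icc (0 : ℝ) 1) :
    1 / Real.sqrt (8 * π * t) ≤ ∫ y in (0 : ℝ)..1, ((heatKernel t x y).re) ^ 2 :=
  stmt1_general t x ht
end

section
/- Let J₀ > 0, ζ > 0, λ > 0, b = λ²J₀²/√(32π), and n ≥ ζλ². Then there exists μ ∈ (0,1) with μ ≥ 8πζ/(J₀² + 8πζ) such that g(t) = b e^{-πμ²b²t} (1 - e^{-2n²π²t})/√t is a probability density function on [0,∞), i.e. ∫₀^∞ g(t) dt = 1. -/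
/-!
By `∫₀^∞ e^{-ct}/√t dt = √(π/c)` the integral equals `1/μ - b/√(μ²b² + 2n²π)`. For
`a = 8πζ/(J₀² + 8πζ)` the hypothesis `n ≥ ζλ²` gives `b/√(2n²π) ≤ 1/a - 1`, so this function of `μ`
exceeds `1` at `a` and is below `1` at `1`; the intermediate value theorem yields `μ ∈ (a, 1)`.
-/

open Real MeasureTheory Set

lemma integrableOn_exp_neg_mul_div_sqrt {c : ℝ} (hc : 0 < c) :
    IntegrableOn (fun t => rexp (-(c * t)) / √t) (Ioi 0) := by
  refine (integrableOn_rpow_mul_exp_neg_mul_rpow (s := -(1 / 2)) (p := 1) (by norm_num)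
    zero_lt_one hc).congr_fun (fun t (ht : 0 < t) => ?_) measurableSet_Ioi
  simp only [rpow_one, rpow_neg ht.le, sqrt_eq_rpow, div_eq_inv_mul, neg_mul]

lemma integral_exp_neg_mul_div_sqrt {c : ℝ} (hc : 0 < c) :
    ∫ t in Ioi 0, rexp (-(c * t)) / √t = √(π / c) := by
  have h := integral_rpow_mul_exp_neg_mul_Ioi (a := 1 / 2) one_half_pos hc
  rw [Gamma_one_half_eq, ← sqrt_eq_rpow, ← sqrt_mul (by positivity), one_div_mul_eq_div] at h
  rw [← h]
  refine setIntegral_congr_fun measurableSet_Ioi fun t (ht : 0 < t) => ?_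
  rw [show (1 / 2 - 1 : ℝ) = -(1 / 2) by norm_num, rpow_neg ht.le, sqrt_eq_rpow,
    div_eq_inv_mul]

lemma integral_exp_neg_mul_mul_one_sub_exp_div_sqrt {c d : ℝ} (hc : 0 < c) (hcd : 0 < c + d) :
    ∫ t in Ioi 0, rexp (-(c * t)) * (1 - rexp (-(d * t))) / √t = √(π / c) - √(π / (c + d)) := by
  rw [← integral_exp_neg_mul_div_sqrt hc, ← integral_exp_neg_mul_div_sqrt hcd,
    ← integral_sub (integrableOn_exp_neg_mul_div_sqrt hc) (integrableOn_exp_neg_mul_div_sqrt hcd)]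
  refine setIntegral_congr_fun measurableSet_Ioi fun t _ => ?_
  rw [show -((c + d) * t) = -(c * t) + -(d * t) by ring, exp_add]
  ring

lemma integral_mul_exp_neg_pi_mul_one_sub_exp_div_sqrt {b μ s : ℝ} (hb : 0 < b) (hμ : 0 < μ) (hs : 0 ≤ s) :
    ∫ t in Ioi 0, b * rexp (-π * μ ^ 2 * b ^ 2 * t) * (1 - rexp (-π * s * t)) / √t
      = 1 / μ - b / √(μ ^ 2 * b ^ 2 + s) := by
  have hc : 0 < π * (μ * b) ^ 2 := by positivity
  have hcd : 0 < π * (μ * b) ^ 2 + π * s := by positivity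
  have h := integral_exp_neg_mul_mul_one_sub_exp_div_sqrt hc hcd
  rw [← mul_add, div_mul_cancel_left₀ pi_ne_zero, div_mul_cancel_left₀ pi_ne_zero,
    sqrt_inv, sqrt_inv, sqrt_sq (by positivity)] at h
  calc _ = b * ∫ t in Ioi 0, rexp (-(π * (μ * b) ^ 2 * t)) * (1 - rexp (-(π * s * t))) / √t := by
        rw [← integral_const_mul]
        refine setIntegral_congr_fun measurableSet_Ioi fun t _ => ?_
        ring_nf
    _ = _ := by
        rw [h, mul_sub, mul_inv, ← mul_pow, mul_comm μ b]
        field_simp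

lemma exists_mem_Ioo_one_div_sub_div_sqrt_eq_one {a b s : ℝ} (ha : 0 < a) (hb : 0 < b)
    (hs : 0 < s) (hab : b / √s ≤ 1 / a - 1) :
    ∃ μ ∈ Ioo a 1, 1 / μ - b / √(μ ^ 2 * b ^ 2 + s) = 1 := by
  have ha1 : a < 1 := by
    have : 1 < 1 / a := by linarith [show 0 < b / √s by positivity]
    rwa [lt_one_div one_pos ha, div_one] at this
  have hcont : ContinuousOn (fun μ => 1 / μ - b / √(μ ^ 2 * b ^ 2 + s)) (Icc a 1) := by
    refine ContinuousOn.sub (continuousOn_const.div continuousOn_id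
      fun μ hμ => (ha.trans_le hμ.1).ne') (continuousOn_const.div (by fun_prop) fun μ _ => ?_)
    positivity
  have hfa : 1 < 1 / a - b / √(a ^ 2 * b ^ 2 + s) := by
    have : b / √(a ^ 2 * b ^ 2 + s) < b / √s :=
      div_lt_div_of_pos_left hb (sqrt_pos.2 hs)
        (sqrt_lt_sqrt hs.le (lt_add_of_pos_left s (by positivity)))
    linarith
  have hf1 : 1 / 1 - b / √(1 ^ 2 * b ^ 2 + s) < 1 := by
    have : 0 < b / √(1 ^ 2 * b ^ 2 + s) := by positivity
    linarith
  exact intermediate_value_Ioo' ha1.le hcont ⟨hf1, hfa⟩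

theorem stmt11 (J₀ ζ lam : ℝ) (hJ : 0 < J₀) (hζ : 0 < ζ) (hlam : 0 < lam)
    (n : ℕ) (hn : ζ * lam ^ 2 ≤ (n : ℝ)) :
    ∃ μ : ℝ, μ ∈ Set.Ioo (0 : ℝ) 1 ∧ 8 * π * ζ / (J₀ ^ 2 + 8 * π * ζ) ≤ μ ∧
      (∫ t in Set.Ioi (0 : ℝ),
        (lam ^ 2 * J₀ ^ 2 / Real.sqrt (32 * π)) *
          Real.exp (-π * μ ^ 2 * (lam ^ 2 * J₀ ^ 2 / Real.sqrt (32 * π)) ^ 2 * t) *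
          (1 - Real.exp (-2 * (n : ℝ) ^ 2 * π ^ 2 * t)) / Real.sqrt t) = 1 := by
  set b := lam ^ 2 * J₀ ^ 2 / √(32 * π)
  have hn0 : 0 < (n : ℝ) := (by positivity : 0 < ζ * lam ^ 2).trans_le hn
  have hb : 0 < b := by positivity
  have hs : 0 < 2 * (n : ℝ) ^ 2 * π := by positivity
  have hbound : b / √(2 * n ^ 2 * π) ≤ 1 / (8 * π * ζ / (J₀ ^ 2 + 8 * π * ζ)) - 1 := by
    have hsqrt : √(32 * π) * √(2 * n ^ 2 * π) = 8 * π * n := by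
      rw [← sqrt_mul (by positivity), show 32 * π * (2 * n ^ 2 * π) = (8 * π * n) ^ 2 by ring,
        sqrt_sq (by positivity)]
    calc b / √(2 * n ^ 2 * π) = lam ^ 2 * J₀ ^ 2 / (8 * π * n) := by rw [div_div, hsqrt]
      _ ≤ lam ^ 2 * J₀ ^ 2 / (8 * π * (ζ * lam ^ 2)) := by gcongr
      _ = _ := by field_simp; ring
  obtain ⟨μ, hμ, hμ_eq⟩ :=
    exists_mem_Ioo_one_div_sub_div_sqrt_eq_one (by positivity) hb hs hbound
  have hμ0 : 0 < μ := lt_trans (by positivity) hμ.1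
  refine ⟨μ, ⟨hμ0, hμ.2⟩, hμ.1.le, ?_⟩
  refine Eq.trans ?_ ((integral_mul_exp_neg_pi_mul_one_sub_exp_div_sqrt hb hμ0 hs.le).trans hμ_eq)
  refine setIntegral_congr_fun measurableSet_Ioi fun t _ => ?_
  ring_nf
end

section
/- Let J₀, ζ > 0, λ > 0, b̃ = λ²J₀²/(8√π), and suppose n ≥ ζλ² and J₀⁴n²τ/(16πζ²) + 16πn²τ < 1 with 0 < τ < 1. Then there exists μ ∈ (0,1) with μ ≥ 16πζ/(J₀² + 32πζ) such that Σ_{r=1}^∞ g̃(r) = 1, where g̃(r) = b̃ e^{-πμ²b̃²rτ} (1 - e^{-4n²π²rτ}) τ/√(rτ); i.e. (g̃(r))_{r≥1} is a discrete probability density. -/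
/-!
Write `g̃(r) = b̃ √τ (φ_{a₁}(r) - φ_{a₂}(r))` with `φ_a(x) = e^{-a x} / √x`, `a₁ = π μ² b̃² τ` and
`a₂ = a₁ + 4 n² π² τ`. Since `φ_a` is decreasing and `∫₀^∞ φ_a = √π / √a` (a Gamma integral),
`∑_{r ≥ 1} φ_a(r)` lies within `2` of `√π / √a`, so the total mass `F(μ)` lies within `2 b̃ √τ` of
`1/μ - b̃ / √(μ² b̃² + 4 π n²)`. The smallness of `τ` makes `F(1) < 1`, while `F(μ) > 1` for small
`μ`; the intermediate value theorem gives a root of `F = 1`, and the lower estimate for `F` at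
that root bounds `μ` from below.
-/

open Real MeasureTheory Set

noncomputable def expDivSqrt (a x : ℝ) : ℝ := exp (-(a * x)) / √x

lemma expDivSqrt_nonneg (a x : ℝ) : 0 ≤ expDivSqrt a x := by
  unfold expDivSqrt; positivity

lemma expDivSqrt_antitone_left {x : ℝ} (hx : 0 ≤ x) : Antitone (expDivSqrt · x) := by
  intro a a' h
  simp only [expDivSqrt]
  gcongr

lemma antitoneOn_expDivSqrt {a : ℝ} (ha : 0 ≤ a) : AntitoneOn (expDivSqrt a) (Ioi 0) := by
  intro x hx y _ hxy
  unfold expDivSqrt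
  have : 0 < √x := sqrt_pos.2 hx
  gcongr

lemma expDivSqrt_eq_rpow_mul {a x : ℝ} (hx : 0 < x) :
    expDivSqrt a x = x ^ ((1 / 2 : ℝ) - 1) * exp (-(a * x)) := by
  rw [expDivSqrt, sqrt_eq_rpow, show (1 / 2 : ℝ) - 1 = -(1 / 2) by norm_num, rpow_neg hx.le]
  ring

lemma integral_expDivSqrt {a : ℝ} (ha : 0 < a) :
    ∫ x in Ioi 0, expDivSqrt a x = √π / √a := by
  rw [setIntegral_congr_fun measurableSet_Ioi fun x hx => expDivSqrt_eq_rpow_mul hx,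
    integral_rpow_mul_exp_neg_mul_Ioi one_half_pos ha, Gamma_one_half_eq, ← sqrt_eq_rpow,
    sqrt_div' _ ha.le, sqrt_one]
  ring

lemma integrableOn_expDivSqrt {a : ℝ} (ha : 0 < a) : IntegrableOn (expDivSqrt a) (Ioi 0) :=
  .of_integral_ne_zero (by rw [integral_expDivSqrt ha]; positivity)

lemma setIntegral_Ioc_expDivSqrt_le_two {a : ℝ} (ha : 0 < a) :
    ∫ x in Ioc 0 1, expDivSqrt a x ≤ 2 :=
  calc ∫ x in Ioc 0 1, expDivSqrt a x ≤ ∫ x in Ioc 0 1, x ^ (-(1 / 2) : ℝ) := by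
        refine setIntegral_mono_on ((integrableOn_expDivSqrt ha).mono_set Ioc_subset_Ioi_self)
          ?_ measurableSet_Ioc fun x hx => ?_
        · rw [← intervalIntegrable_iff_integrableOn_Ioc_of_le zero_le_one]
          exact intervalIntegral.intervalIntegrable_rpow' (by norm_num)
        · rw [expDivSqrt, sqrt_eq_rpow, rpow_neg hx.1.le, div_eq_mul_inv]
          exact mul_le_of_le_one_left (inv_nonneg.2 (rpow_nonneg hx.1.le _))
            (exp_le_one_iff.2 (by nlinarith [hx.1]))
    _ = 2 := by
        rw [← intervalIntegral.integral_of_le zero_le_one, integral_rpow (by norm_num)]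
        norm_num

section TailBounds

variable {a : ℝ} (ha : 0 < a)
include ha

lemma antitoneOn_Ici_one_expDivSqrt : AntitoneOn (expDivSqrt a) (Ici ((1 : ℕ) : ℝ)) :=
  (antitoneOn_expDivSqrt ha.le).mono fun x (hx : _ ≤ x) =>
    mem_Ioi.2 (one_pos.trans_le (by simpa using hx))

lemma integrableOn_Ioi_one_expDivSqrt : IntegrableOn (expDivSqrt a) (Ioi ((1 : ℕ) : ℝ)) :=
  (integrableOn_expDivSqrt ha).mono_set (Ioi_subset_Ioi (by simp))

lemma summable_expDivSqrt : Summable fun n : ℕ => expDivSqrt a (n + 1) := by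
  have := (antitoneOn_Ici_one_expDivSqrt ha).summable_of_integrableOn_Ioi
    (integrableOn_Ioi_one_expDivSqrt ha) fun x _ => expDivSqrt_nonneg a x
  exact_mod_cast (summable_nat_add_iff 1).2 this

lemma integral_Ioc_add_integral_Ioi_expDivSqrt :
    (∫ x in Ioc 0 1, expDivSqrt a x) + ∫ x in Ioi 1, expDivSqrt a x = √π / √a := by
  rw [← integral_expDivSqrt ha, ← setIntegral_union (Ioc_disjoint_Ioi le_rfl) measurableSet_Ioi
    ((integrableOn_expDivSqrt ha).mono_set Ioc_subset_Ioi_self)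
    ((integrableOn_expDivSqrt ha).mono_set (Ioi_subset_Ioi zero_le_one)),
    Ioc_union_Ioi_eq_Ioi zero_le_one]

lemma tsum_expDivSqrt_le : ∑' n : ℕ, expDivSqrt a (n + 1) ≤ √π / √a := by
  have head : expDivSqrt a 1 ≤ ∫ x in Ioc 0 1, expDivSqrt a x := by
    have := setIntegral_mono_on (integrableOn_const (s := Ioc (0 : ℝ) 1) (by simp) (by simp))
      ((integrableOn_expDivSqrt ha).mono_set Ioc_subset_Ioi_self) measurableSet_Ioc
      fun x hx => antitoneOn_expDivSqrt ha.le hx.1 (mem_Ioi.2 one_pos) hx.2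
    simpa using this
  have tail := (antitoneOn_Ici_one_expDivSqrt ha).tsum_comp_add_le_integral 1
    (integrableOn_Ioi_one_expDivSqrt ha) fun x _ => expDivSqrt_nonneg a x
  rw [(summable_expDivSqrt ha).tsum_eq_zero_add]
  push_cast at tail ⊢
  linarith [integral_Ioc_add_integral_Ioi_expDivSqrt ha]

lemma sqrt_pi_div_sqrt_sub_two_le_tsum_expDivSqrt :
    √π / √a - 2 ≤ ∑' n : ℕ, expDivSqrt a (n + 1) := by
  have tail := (antitoneOn_Ici_one_expDivSqrt ha).integral_le_tsum_comp_add 1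
    ((antitoneOn_Ici_one_expDivSqrt ha).summable_of_integrableOn_Ioi
      (integrableOn_Ioi_one_expDivSqrt ha) fun x _ => expDivSqrt_nonneg a x)
    fun x _ => expDivSqrt_nonneg a x
  push_cast at tail
  linarith [integral_Ioc_add_integral_Ioi_expDivSqrt ha, setIntegral_Ioc_expDivSqrt_le_two ha]

end TailBounds

lemma continuousOn_tsum_expDivSqrt {a₀ : ℝ} (ha₀ : 0 < a₀) :
    ContinuousOn (fun a => ∑' n : ℕ, expDivSqrt a (n + 1)) (Ici a₀) :=
  continuousOn_tsum (fun n => by unfold expDivSqrt; fun_prop) (summable_expDivSqrt ha₀)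
    fun n a ha => by
      rw [norm_of_nonneg (expDivSqrt_nonneg _ _)]
      exact expDivSqrt_antitone_left (by positivity) ha

/-- The paper's `g̃(r + 1)`, with `b = b̃` and `m = n`. -/
noncomputable def gTilde (b m τ μ : ℝ) (r : ℕ) : ℝ :=
  b * exp (-π * μ ^ 2 * b ^ 2 * ((r : ℝ) + 1) * τ) *
    (1 - exp (-4 * m ^ 2 * π ^ 2 * ((r : ℝ) + 1) * τ)) * τ / √(((r : ℝ) + 1) * τ)

section Series

variable {b m τ : ℝ}

lemma gTilde_eq (hτ : 0 < τ) (μ : ℝ) (r : ℕ) :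
    gTilde b m τ μ r = b * √τ * (expDivSqrt (π * μ ^ 2 * b ^ 2 * τ) (r + 1)
      - expDivSqrt (π * μ ^ 2 * b ^ 2 * τ + 4 * m ^ 2 * π ^ 2 * τ) (r + 1)) := by
  have hx : (0 : ℝ) < r + 1 := by positivity
  have hexp : exp (-((π * μ ^ 2 * b ^ 2 * τ + 4 * m ^ 2 * π ^ 2 * τ) * (r + 1))) =
      exp (-π * μ ^ 2 * b ^ 2 * ((r : ℝ) + 1) * τ) *
        exp (-4 * m ^ 2 * π ^ 2 * ((r : ℝ) + 1) * τ) := by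
    rw [← exp_add]; ring_nf
  rw [gTilde, expDivSqrt, expDivSqrt, hexp, sqrt_mul hx.le]
  field_simp
  rw [sq_sqrt hτ.le]
  ring_nf

lemma tsum_gTilde_eq (hb : 0 < b) (hτ : 0 < τ) {μ : ℝ} (hμ : 0 < μ) :
    ∑' r, gTilde b m τ μ r = b * √τ * ((∑' r : ℕ, expDivSqrt (π * μ ^ 2 * b ^ 2 * τ) (r + 1))
      - ∑' r : ℕ, expDivSqrt (π * μ ^ 2 * b ^ 2 * τ + 4 * m ^ 2 * π ^ 2 * τ) (r + 1)) := by
  have ha₁ : 0 < π * μ ^ 2 * b ^ 2 * τ := by positivity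
  have ha₂ : 0 < π * μ ^ 2 * b ^ 2 * τ + 4 * m ^ 2 * π ^ 2 * τ := by positivity
  simp_rw [gTilde_eq hτ]
  rw [tsum_mul_left, (summable_expDivSqrt ha₁).tsum_sub (summable_expDivSqrt ha₂)]

lemma abs_tsum_gTilde_sub_le (hb : 0 < b) (hτ : 0 < τ) {μ : ℝ} (hμ : 0 < μ) :
    |∑' r, gTilde b m τ μ r - (1 / μ - b / √(μ ^ 2 * b ^ 2 + 4 * π * m ^ 2))| ≤ 2 * b * √τ := by
  set a₁ := π * μ ^ 2 * b ^ 2 * τ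
  set a₂ := π * μ ^ 2 * b ^ 2 * τ + 4 * m ^ 2 * π ^ 2 * τ
  set c := √(μ ^ 2 * b ^ 2 + 4 * π * m ^ 2)
  have ha₁ : 0 < a₁ := by positivity
  have ha₂ : 0 < a₂ := by positivity
  have hv₁ : b * √τ * (√π / √a₁) = 1 / μ := by
    rw [show a₁ = (√π * (μ * b) * √τ) ^ 2 by
      rw [mul_pow, mul_pow, sq_sqrt pi_pos.le, sq_sqrt hτ.le]; ring, sqrt_sq (by positivity)]
    field_simp
  have hv₂ : b * √τ * (√π / √a₂) = b / c := by
    rw [show a₂ = (√π * √τ * c) ^ 2 by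
      rw [mul_pow, mul_pow, sq_sqrt pi_pos.le, sq_sqrt hτ.le, sq_sqrt (by positivity)]; ring,
      sqrt_sq (by positivity)]
    field_simp
  have h₁ := tsum_expDivSqrt_le ha₁
  have h₁' := sqrt_pi_div_sqrt_sub_two_le_tsum_expDivSqrt ha₁
  have h₂ := tsum_expDivSqrt_le ha₂
  have h₂' := sqrt_pi_div_sqrt_sub_two_le_tsum_expDivSqrt ha₂
  rw [tsum_gTilde_eq hb hτ hμ, ← hv₁, ← hv₂, ← mul_sub, ← mul_sub, abs_mul,
    abs_of_pos (by positivity), show 2 * b * √τ = b * √τ * 2 by ring]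
  gcongr
  rw [abs_le]
  constructor <;> linarith

lemma continuousOn_tsum_gTilde (hb : 0 < b) (hτ : 0 < τ) {μ₀ : ℝ} (hμ₀ : 0 < μ₀) :
    ContinuousOn (fun μ => ∑' r, gTilde b m τ μ r) (Ici μ₀) := by
  have hS := continuousOn_tsum_expDivSqrt (a₀ := π * μ₀ ^ 2 * b ^ 2 * τ) (by positivity)
  have ha₁ : MapsTo (fun μ : ℝ => π * μ ^ 2 * b ^ 2 * τ) (Ici μ₀)
      (Ici (π * μ₀ ^ 2 * b ^ 2 * τ)) :=
    fun μ (hμ : μ₀ ≤ μ) => by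
      have := pow_le_pow_left₀ hμ₀.le hμ 2
      simp only [mem_Ici]; gcongr
  have ha₂ : MapsTo (fun μ : ℝ => π * μ ^ 2 * b ^ 2 * τ + 4 * m ^ 2 * π ^ 2 * τ) (Ici μ₀)
      (Ici (π * μ₀ ^ 2 * b ^ 2 * τ)) :=
    fun μ hμ => (ha₁ hμ).trans (le_add_of_nonneg_right (by positivity : 0 ≤ 4 * m ^ 2 * π ^ 2 * τ))
  refine ContinuousOn.congr (continuousOn_const.mul ((hS.comp (by fun_prop) ha₁).sub
    (hS.comp (by fun_prop) ha₂))) fun μ (hμ : μ₀ ≤ μ) =>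
      tsum_gTilde_eq hb hτ (hμ₀.trans_le hμ)

end Series

theorem exists_tsum_gTilde_eq_one {b m τ : ℝ} (hb : 0 < b) (hm : 0 < m) (hτ : 0 < τ)
    (h : 4 * τ * (b ^ 2 + 4 * π * m ^ 2) < 1) :
    ∃ μ ∈ Ioo (0 : ℝ) 1, 1 / (2 + b / (2 * √π * m)) ≤ μ ∧ ∑' r, gTilde b m τ μ r = 1 := by
  set F := fun μ => ∑' r, gTilde b m τ μ r
  set K := b / (2 * √π * m)
  have hK : 0 < K := by positivity
  have h2bτ : 2 * b * √τ < 1 := by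
    refine (sq_lt_one_iff₀ (by positivity)).1 ?_
    rw [mul_pow, sq_sqrt hτ.le]
    nlinarith [mul_pos hτ (mul_pos pi_pos (pow_pos hm 2))]
  have lower : ∀ μ, 0 < μ → 1 / μ - (K + 1) ≤ F μ := fun μ hμ => by
    have hcK : b / √(μ ^ 2 * b ^ 2 + 4 * π * m ^ 2) ≤ K := by
      refine div_le_div_of_nonneg_left hb.le (by positivity) (le_sqrt_of_sq_le ?_)
      rw [mul_pow, mul_pow, sq_sqrt pi_pos.le]
      nlinarith [sq_nonneg (μ * b)]
    linarith [(abs_le.1 (abs_tsum_gTilde_sub_le (m := m) hb hτ hμ)).1]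
  have hF₁ : F 1 < 1 := by
    set c := √(b ^ 2 + 4 * π * m ^ 2)
    have hc : 0 < c := sqrt_pos.2 (by positivity)
    have hgap : 2 * b * √τ < b / c := by
      have : 2 * √τ * c < 1 := by
        refine (sq_lt_one_iff₀ (by positivity)).1 ?_
        rw [mul_pow, mul_pow, sq_sqrt hτ.le, sq_sqrt (by positivity)]
        linarith
      rw [lt_div_iff₀ hc]
      nlinarith
    have := (abs_le.1 (abs_tsum_gTilde_sub_le (m := m) hb hτ one_pos)).2
    simp only [one_pow, one_mul, div_one] at this
    linarith
  set μ₀ := 1 / (K + 3)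
  have hμ₀ : 0 < μ₀ := by positivity
  have hFμ₀ : 1 < F μ₀ := by
    have := lower μ₀ hμ₀
    rw [one_div_one_div] at this
    linarith
  obtain ⟨μ, ⟨hμ₀μ, hμ1⟩, hFμ⟩ :=
    intermediate_value_Icc' ((div_le_one (by positivity)).2 (by linarith))
    ((continuousOn_tsum_gTilde hb hτ hμ₀).mono Icc_subset_Ici_self) ⟨hF₁.le, hFμ₀.le⟩
  have hμ : 0 < μ := hμ₀.trans_le hμ₀μ
  refine ⟨μ, ⟨hμ, hμ1.lt_of_ne ?_⟩, (one_div_le hμ (by positivity)).1 ?_, hFμ⟩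
  · rintro rfl
    exact hF₁.ne hFμ
  · linarith [lower μ hμ]

theorem stmt14 (J₀ ζ lam τ : ℝ) (hJ : 0 < J₀) (hζ : 0 < ζ) (hlam : 0 < lam)
    (hτ : τ ∈ Set.Ioo (0 : ℝ) 1) (n : ℕ) (hn : ζ * lam ^ 2 ≤ (n : ℝ))
    (hcond : J₀ ^ 4 * (n : ℝ) ^ 2 * τ / (16 * π * ζ ^ 2) + 16 * π * (n : ℝ) ^ 2 * τ < 1) :
    ∃ μ : ℝ, μ ∈ Set.Ioo (0 : ℝ) 1 ∧ 16 * π * ζ / (J₀ ^ 2 + 32 * π * ζ) ≤ μ ∧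
      (∑' r : ℕ,
        (lam ^ 2 * J₀ ^ 2 / (8 * Real.sqrt π)) *
          Real.exp (-π * μ ^ 2 * (lam ^ 2 * J₀ ^ 2 / (8 * Real.sqrt π)) ^ 2 *
            ((r : ℝ) + 1) * τ) *
          (1 - Real.exp (-4 * (n : ℝ) ^ 2 * π ^ 2 * ((r : ℝ) + 1) * τ)) * τ /
          Real.sqrt (((r : ℝ) + 1) * τ)) = 1 := by
  obtain ⟨hτ₀, -⟩ := hτ
  set b := lam ^ 2 * J₀ ^ 2 / (8 * √π)
  have hb : 0 < b := by positivity
  have hn₀ : (0 : ℝ) < n := lt_of_lt_of_le (by positivity) hn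
  have hπ : √π ^ 2 = π := sq_sqrt pi_pos.le
  have hsmall : 4 * τ * (b ^ 2 + 4 * π * n ^ 2) < 1 := by
    have : 4 * τ * b ^ 2 ≤ J₀ ^ 4 * n ^ 2 * τ / (16 * π * ζ ^ 2) :=
      calc 4 * τ * b ^ 2 = J₀ ^ 4 * (ζ * lam ^ 2) ^ 2 * τ / (16 * π * ζ ^ 2) := by
            simp only [b]; field_simp; rw [hπ]; ring
        _ ≤ J₀ ^ 4 * n ^ 2 * τ / (16 * π * ζ ^ 2) := by gcongr
    linarith
  have hbound : 16 * π * ζ / (J₀ ^ 2 + 32 * π * ζ) ≤ 1 / (2 + b / (2 * √π * n)) := by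
    have : b / (2 * √π * n) ≤ J₀ ^ 2 / (16 * π * ζ) :=
      calc b / (2 * √π * n) = J₀ ^ 2 * (ζ * lam ^ 2) / (16 * π * ζ * n) := by
            simp only [b]; field_simp; rw [hπ]; ring
        _ ≤ J₀ ^ 2 * n / (16 * π * ζ * n) := by gcongr
        _ = J₀ ^ 2 / (16 * π * ζ) := by field_simp
    calc 16 * π * ζ / (J₀ ^ 2 + 32 * π * ζ) = 1 / (2 + J₀ ^ 2 / (16 * π * ζ)) := by
          field_simp; ring
      _ ≤ 1 / (2 + b / (2 * √π * n)) := by gcongr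
  obtain ⟨μ, hμ, hμ_ge, hsum⟩ := exists_tsum_gTilde_eq_one hb hn₀ hτ₀ hsmall
  exact ⟨μ, hμ, hbound.trans hμ_ge, hsum⟩
end

section
/- Let cₙʳ = sin²(rπ/n)/((rπ/n)²) for 1 ≤ r ≤ ⌊n/2⌋, so cₙʳ ∈ [4/π², 1]. Then there is a constant C > 0 such that for all n ≥ 3, Σ_{r=1}^{⌊n/2⌋} ∫₀^∞ |e^{-4π²r²t} - e^{-4π²r²cₙʳ t}|² dt ≤ C/n. -/
/-!
With `a = 4π²r²`, `c = cₙʳ` and `b = a c`, the bound `0 ≤ e^{-bt} - e^{-at} ≤ (a - b) t e^{-bt}`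
(from `1 - x ≤ e^{-x}`) and `∫₀^∞ t² e^{-2bt} dt = 1/(4b³)` bound the `r`-th integral by
`(1 - c)² / (4 a c³)`. Jordan's inequality keeps `c ≥ 4/π²`, and `|z - sin z| ≤ |z|³/6` gives
`1 - c ≤ z²/3` for `z = rπ/n`; so the `r`-th term is `O(r²/n⁴) = O(1/n²)`, and the `⌊n/2⌋`
terms add up to `O(1/n)`.
-/

open Real MeasureTheory

/-- `cₙʳ = sin²(rπ/n)/((rπ/n)²)`. -/
noncomputable def cfac (n r : ℕ) : ℝ := Real.sin ((r : ℝ) * π / n) ^ 2 / ((r : ℝ) * π / n) ^ 2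

open Set
open scoped Nat

lemma integral_pow_mul_exp_neg_mul_Ioi (k : ℕ) {c : ℝ} (hc : 0 < c) :
    ∫ t in Ioi (0 : ℝ), t ^ k * exp (-(c * t)) = k ! / c ^ (k + 1) := by
  have key := integral_rpow_mul_exp_neg_mul_Ioi (a := k + 1) (by positivity) hc
  simp only [add_sub_cancel_right, rpow_natCast, Gamma_nat_eq_factorial, one_div,
    inv_rpow hc.le] at key
  rw [key, ← rpow_natCast, Nat.cast_add_one]
  field_simp

lemma integrableOn_pow_mul_exp_neg_mul_Ioi (k : ℕ) {c : ℝ} (hc : 0 < c) :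
    IntegrableOn (fun t ↦ t ^ k * exp (-(c * t))) (Ioi 0) :=
  .of_integral_ne_zero (by rw [integral_pow_mul_exp_neg_mul_Ioi k hc]; positivity)

lemma exp_neg_mul_sub_exp_neg_mul_le (a b t : ℝ) :
    exp (-(b * t)) - exp (-(a * t)) ≤ (a - b) * t * exp (-(b * t)) := by
  have hsplit : exp (-(a * t)) = exp (-(b * t)) * exp (-((a - b) * t)) := by
    rw [← exp_add]; ring_nf
  rw [hsplit]
  nlinarith [one_sub_le_exp_neg ((a - b) * t), exp_pos (-(b * t))]

lemma integral_sq_exp_neg_mul_sub_exp_neg_mul_le {a b : ℝ} (hb : 0 < b) (hba : b ≤ a) :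
    ∫ t in Ioi (0 : ℝ), (exp (-(a * t)) - exp (-(b * t))) ^ 2 ≤ (a - b) ^ 2 / (4 * b ^ 3) := by
  have hpointwise : ∀ t ∈ Ioi (0 : ℝ), (exp (-(a * t)) - exp (-(b * t))) ^ 2 ≤
      (a - b) ^ 2 * (t ^ 2 * exp (-(2 * b * t))) := by
    intro t ht
    have hmono : exp (-(a * t)) ≤ exp (-(b * t)) :=
      exp_le_exp.2 (neg_le_neg (mul_le_mul_of_nonneg_right hba (le_of_lt ht)))
    calc (exp (-(a * t)) - exp (-(b * t))) ^ 2 = (exp (-(b * t)) - exp (-(a * t))) ^ 2 := by ring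
      _ ≤ ((a - b) * t * exp (-(b * t))) ^ 2 :=
        pow_le_pow_left₀ (sub_nonneg.2 hmono) (exp_neg_mul_sub_exp_neg_mul_le a b t) 2
      _ = (a - b) ^ 2 * (t ^ 2 * exp (-(2 * b * t))) := by
        rw [mul_pow, mul_pow, ← exp_nat_mul]; ring_nf
  calc ∫ t in Ioi (0 : ℝ), (exp (-(a * t)) - exp (-(b * t))) ^ 2
      ≤ ∫ t in Ioi (0 : ℝ), (a - b) ^ 2 * (t ^ 2 * exp (-(2 * b * t))) :=
        setIntegral_mono_of_nonneg (fun _ _ ↦ sq_nonneg _) hpointwise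
          ((integrableOn_pow_mul_exp_neg_mul_Ioi 2 (by positivity)).const_mul _)
    _ = (a - b) ^ 2 / (4 * b ^ 3) := by
        rw [integral_const_mul, integral_pow_mul_exp_neg_mul_Ioi 2 (by positivity)]
        field_simp
        ring

lemma one_sub_sin_sq_div_sq_le {z : ℝ} (hz : z ≠ 0) : 1 - sin z ^ 2 / z ^ 2 ≤ z ^ 2 / 3 := by
  have hprod : z ^ 2 - sin z ^ 2 ≤ z ^ 4 / 3 :=
    calc z ^ 2 - sin z ^ 2 = (z - sin z) * (z + sin z) := by ring
      _ ≤ |z - sin z| * |z + sin z| := by rw [← abs_mul]; exact le_abs_self _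
      _ ≤ |z| ^ 3 / 6 * (2 * |z|) := by
        gcongr
        · exact abs_sub_sin_le z
        · exact (abs_add_le _ _).trans (by linarith [abs_sin_le_abs (x := z)])
      _ = z ^ 4 / 3 := by rw [← Even.pow_abs ⟨2, rfl⟩ z]; ring
  rw [one_sub_div (pow_ne_zero 2 hz), div_le_iff₀ (by positivity)]
  linarith

lemma four_div_pi_sq_le_sin_sq_div_sq {z : ℝ} (hz : 0 < z) (hzπ : z ≤ π / 2) :
    4 / π ^ 2 ≤ sin z ^ 2 / z ^ 2 := by
  have hJordan := mul_le_sin hz.le hzπ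
  rw [le_div_iff₀ (by positivity), show 4 / π ^ 2 * z ^ 2 = (2 / π * z) ^ 2 by ring]
  exact pow_le_pow_left₀ (by positivity) hJordan 2

lemma sin_sq_div_sq_le_one (z : ℝ) : sin z ^ 2 / z ^ 2 ≤ 1 :=
  div_le_one_of_le₀ sin_sq_le_sq (sq_nonneg z)

lemma integral_sq_exp_neg_mul_sub_exp_neg_mul_mul_le {a c : ℝ} (ha : 0 < a) (hc : 0 < c)
    (hc1 : c ≤ 1) :
    ∫ t in Ioi (0 : ℝ), (exp (-a * t) - exp (-a * c * t)) ^ 2 ≤ (1 - c) ^ 2 / (4 * a * c ^ 3) := by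
  have h := integral_sq_exp_neg_mul_sub_exp_neg_mul_le (mul_pos ha hc)
    (mul_le_of_le_one_right ha.le hc1)
  simp only [neg_mul] at h ⊢
  convert h using 1
  field_simp

lemma integral_sq_exp_sub_exp_cfac_le {n r : ℕ} (hr : 1 ≤ r) (hrn : 2 * r ≤ n) :
    ∫ t in Ioi (0 : ℝ), (exp (-4 * π ^ 2 * (r : ℝ) ^ 2 * t) -
        exp (-4 * π ^ 2 * (r : ℝ) ^ 2 * cfac n r * t)) ^ 2 ≤
      π ^ 8 / 9216 * ((r : ℝ) ^ 2 / n ^ 4) := by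
  have hr0 : (0 : ℝ) < r := by exact_mod_cast hr
  have hn0 : (0 : ℝ) < n := by exact_mod_cast (by omega : 0 < n)
  have hrn' : 2 * (r : ℝ) ≤ n := by exact_mod_cast hrn
  set z : ℝ := r * π / n with hz
  have hz0 : 0 < z := by positivity
  have hzπ : z ≤ π / 2 := by
    rw [hz, div_le_div_iff₀ hn0 two_pos]
    nlinarith [pi_pos]
  have hc : cfac n r = sin z ^ 2 / z ^ 2 := rfl
  have hc_lower : 4 / π ^ 2 ≤ cfac n r := hc ▸ four_div_pi_sq_le_sin_sq_div_sq hz0 hzπ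
  have hc_gap : 1 - cfac n r ≤ z ^ 2 / 3 := hc ▸ one_sub_sin_sq_div_sq_le hz0.ne'
  have hc_upper : cfac n r ≤ 1 := hc ▸ sin_sq_div_sq_le_one z
  have hc0 : 0 < cfac n r := lt_of_lt_of_le (by positivity) hc_lower
  calc _ = ∫ t in Ioi (0 : ℝ), (exp (-(4 * π ^ 2 * r ^ 2) * t) -
          exp (-(4 * π ^ 2 * r ^ 2) * cfac n r * t)) ^ 2 := by simp only [neg_mul]
    _ ≤ (1 - cfac n r) ^ 2 / (4 * (4 * π ^ 2 * r ^ 2) * cfac n r ^ 3) :=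
        integral_sq_exp_neg_mul_sub_exp_neg_mul_mul_le (by positivity) hc0 hc_upper
    _ ≤ (z ^ 2 / 3) ^ 2 / (4 * (4 * π ^ 2 * r ^ 2) * (4 / π ^ 2) ^ 3) := by gcongr
    _ = π ^ 8 / 9216 * ((r : ℝ) ^ 2 / n ^ 4) := by
        rw [hz]; field_simp; ring

lemma sum_Icc_sq_div_pow_four_le (n : ℕ) :
    ∑ r ∈ Finset.Icc 1 (n / 2), (r : ℝ) ^ 2 / n ^ 4 ≤ 1 / n := by
  calc ∑ r ∈ Finset.Icc 1 (n / 2), (r : ℝ) ^ 2 / n ^ 4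
      ≤ ∑ r ∈ Finset.Icc 1 (n / 2), (n : ℝ) ^ 2 / n ^ 4 := by
        gcongr with r hr
        exact_mod_cast (Finset.mem_Icc.1 hr).2.trans (Nat.div_le_self n 2)
    _ = (n / 2 : ℕ) * ((n : ℝ) ^ 2 / n ^ 4) := by simp
    _ ≤ n * ((n : ℝ) ^ 2 / n ^ 4) := by gcongr; exact_mod_cast Nat.div_le_self n 2
    _ = 1 / n := by
        rcases eq_or_ne n 0 with rfl | hn
        · simp
        · field_simp

theorem stmt17 :
    ∃ C : ℝ, 0 < C ∧ ∀ n : ℕ, 3 ≤ n →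
      ∑ r ∈ Finset.Icc 1 (n / 2),
        (∫ t in Set.Ioi (0 : ℝ),
          (Real.exp (-4 * π ^ 2 * (r : ℝ) ^ 2 * t) -
            Real.exp (-4 * π ^ 2 * (r : ℝ) ^ 2 * cfac n r * t)) ^ 2) ≤ C / n := by
  refine ⟨π ^ 8 / 9216, by positivity, fun n _ ↦ ?_⟩
  calc _ ≤ ∑ r ∈ Finset.Icc 1 (n / 2), π ^ 8 / 9216 * ((r : ℝ) ^ 2 / n ^ 4) := by
        refine Finset.sum_le_sum fun r hr ↦ ?_
        obtain ⟨hr1, hr2⟩ := Finset.mem_Icc.1 hr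
        exact integral_sq_exp_sub_exp_cfac_le hr1 (by omega)
    _ = π ^ 8 / 9216 * ∑ r ∈ Finset.Icc 1 (n / 2), (r : ℝ) ^ 2 / n ^ 4 := by
        rw [Finset.mul_sum]
    _ ≤ π ^ 8 / 9216 * (1 / n) := by gcongr; exact sum_Icc_sq_div_pow_four_le n
    _ = π ^ 8 / 9216 / n := by ring
end
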